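/- If σ is a real symmetric 2N×2N matrix such that σ + iΩ is positive semidefinite (as a Hermitian matrix over ℂ), then σ is positive definite. -/

import Mathlib

/-!
For real `x`, antisymmetry of `Ω` kills the imaginary part of `x ⬝ᵥ (σ + iΩ) x`, so
`x ⬝ᵥ σ x = x ⬝ᵥ (σ + iΩ) x ≥ 0`. If this vanishes, `x` lies in the kernel of the positive
semidefinite matrix `σ + iΩ`; the imaginary part of `(σ + iΩ) x = 0` is `Ω x = 0`, and `Ω` is
invertible (`Ω² = -1`), so `x = 0`.
-/

open Matrix ComplexOrder

/-- The standard symplectic form `⊕_N [[0,1],[-1,0]]` on a `2N`-dimensional space. -/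
def stdOmega (N : ℕ) (R : Type) [Ring R] :
    Matrix (Fin N × Fin 2) (Fin N × Fin 2) R := fun i j =>
  if i.1 = j.1 then
    (if i.2 = 0 ∧ j.2 = 1 then 1 else if i.2 = 1 ∧ j.2 = 0 then -1 else 0)
  else 0

open Complex

section RealAndImaginaryParts

variable {n : Type*} [Fintype n]

lemma dotProduct_mulVec_self_eq_zero_of_transpose_eq_neg {R : Type*} [CommRing R]
    [IsAddTorsionFree R] {B : Matrix n n R} (hB : Bᵀ = -B) (x : n → R) :
    x ⬝ᵥ B *ᵥ x = 0 :=
  self_eq_neg.mp <| by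
    conv_lhs => rw [dotProduct_mulVec, ← mulVec_transpose, hB, neg_mulVec, neg_dotProduct,
      dotProduct_comm]

lemma map_ofReal_add_I_smul_mulVec (A B : Matrix n n ℝ) (x : n → ℝ) :
    (A.map ofReal + I • B.map ofReal) *ᵥ (ofReal ∘ x) =
      ofReal ∘ (A *ᵥ x) + I • ofReal ∘ (B *ᵥ x) := by
  ext i
  rw [add_mulVec, smul_mulVec]
  exact congrArg₂ (· + I • ·) (ofRealHom.map_mulVec A x i).symm (ofRealHom.map_mulVec B x i).symm

lemma star_ofReal_dotProduct_map_ofReal_add_I_smul_mulVec (A B : Matrix n n ℝ) (x : n → ℝ) :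
    star (ofReal ∘ x) ⬝ᵥ (A.map ofReal + I • B.map ofReal) *ᵥ (ofReal ∘ x) =
      ((x ⬝ᵥ A *ᵥ x : ℝ) : ℂ) + I * ((x ⬝ᵥ B *ᵥ x : ℝ) : ℂ) := by
  have hstar : star (ofReal ∘ x) = ofReal ∘ x := funext fun i => conj_ofReal (x i)
  rw [hstar, map_ofReal_add_I_smul_mulVec, dotProduct_add, dotProduct_smul, smul_eq_mul]
  exact congrArg₂ (· + I * ·) (ofRealHom.map_dotProduct x _).symm
    (ofRealHom.map_dotProduct x _).symm

theorem posDef_of_posSemidef_map_ofReal_add_I_smul {A B : Matrix n n ℝ} (hA : A.IsSymm)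
    (hB : Bᵀ = -B) (hB_inj : Function.Injective B.mulVec)
    (h : (A.map ofReal + I • B.map ofReal).PosSemidef) : A.PosDef := by
  have hA' : A.IsHermitian := by rwa [IsHermitian, conjTranspose_eq_transpose_of_trivial]
  refine .of_dotProduct_mulVec_pos hA' fun x hx => ?_
  have hquad := star_ofReal_dotProduct_map_ofReal_add_I_smul_mulVec A B x
  rw [dotProduct_mulVec_self_eq_zero_of_transpose_eq_neg hB, ofReal_zero, mul_zero,
    add_zero] at hquad
  have hnonneg : 0 ≤ x ⬝ᵥ A *ᵥ x := by exact_mod_cast hquad ▸ h.dotProduct_mulVec_nonneg _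
  rw [star_trivial]
  refine hnonneg.lt_of_ne fun hzero => hx <| hB_inj ?_
  have hker := (h.dotProduct_mulVec_zero_iff _).mp (by rw [hquad, ← hzero, ofReal_zero])
  rw [map_ofReal_add_I_smul_mulVec] at hker
  rw [mulVec_zero]
  funext i
  simpa using congrArg im (congrFun hker i)

end RealAndImaginaryParts

lemma stdOmega_map {R S : Type} [Ring R] [Ring S] (f : R →+* S) (N : ℕ) :
    (stdOmega N R).map f = stdOmega N S := by
  ext i j
  simp only [map_apply, stdOmega, apply_ite f, map_one, map_neg, map_zero]

lemma stdOmega_transpose (N : ℕ) (R : Type) [Ring R] : (stdOmega N R)ᵀ = -stdOmega N R := by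
  ext ⟨a, b⟩ ⟨c, d⟩
  obtain rfl | hac := eq_or_ne a c
  · fin_cases b <;> fin_cases d <;> simp [stdOmega]
  · simp [stdOmega, hac, hac.symm]

lemma stdOmega_mul_self (N : ℕ) (R : Type) [Ring R] : stdOmega N R * stdOmega N R = -1 := by
  ext ⟨a, b⟩ ⟨c, d⟩
  simp only [mul_apply, Fintype.sum_prod_type, Fin.sum_univ_two]
  obtain rfl | hac := eq_or_ne a c
  · fin_cases b <;> fin_cases d <;> simp [stdOmega, one_apply]
  · simp [stdOmega, one_apply, hac, Finset.sum_add_distrib, Finset.sum_ite_eq']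

lemma stdOmega_mulVec_injective (N : ℕ) (R : Type) [CommRing R] :
    Function.Injective (stdOmega N R).mulVec :=
  Function.LeftInverse.injective (g := fun y => -(stdOmega N R *ᵥ y)) fun x => by
    dsimp only
    rw [mulVec_mulVec, stdOmega_mul_self, neg_mulVec, one_mulVec, neg_neg]

/-- If `σ` is a real symmetric `2N×2N` matrix with `σ + iΩ` positive semidefinite
(as a Hermitian matrix over `ℂ`), then `σ` is positive definite. -/
theorem stmt2 (N : ℕ) (σ : Matrix (Fin N × Fin 2) (Fin N × Fin 2) ℝ)
    (hσ : σ.IsSymm)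
    (h : (σ.map (Complex.ofReal) + Complex.I • stdOmega N ℂ).PosSemidef) :
    σ.PosDef := by
  rw [← stdOmega_map ofRealHom] at h
  exact posDef_of_posSemidef_map_ofReal_add_I_smul hσ (stdOmega_transpose N ℝ)
    (stdOmega_mulVec_injective N ℝ) h
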